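/- arXiv:cs/0003009 — 6 statements merged into one kernel-verified Lean document; each statement's English description precedes it below -/
import Mathlib

section
/- If an OCF κ is indifferent with respect to a finite family R of conditionals, then for all worlds ω₁, ω₂ ∈ Ω, σ_R(ω₁) = σ_R(ω₂) implies κ(ω₁) = κ(ω₂) (including the case of infinite values). -/
open scoped Classical

/-- The conditional-structure map of a finite family of conditionals. -/
noncomputable def sigmaR {Ω : Type*} {n : ℕ} (R : Fin n → Set Ω × Set Ω) (ω : Ω) :
    (Fin n → ℤ) × (Fin n → ℤ) :=
  (fun i => if ω ∈ (R i).1 ∩ (R i).2 then 1 else 0,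
   fun i => if ω ∈ (R i).1 ∩ ((R i).2)ᶜ then 1 else 0)

/-- The `i`-th component pair of the conditional structure of a world. -/
noncomputable def sigmai {Ω : Type*} {n : ℕ} (R : Fin n → Set Ω × Set Ω)
    (i : Fin n) (ω : Ω) : ℤ × ℤ :=
  ((sigmaR R ω).1 i, (sigmaR R ω).2 i)

/-- An OCF `κ` is indifferent with respect to a family `R` of conditionals. -/
noncomputable def Indifferent {Ω : Type*} [Fintype Ω] {n : ℕ}
    (κ : Ω → ℕ∞) (R : Fin n → Set Ω × Set Ω) : Prop :=
  (∀ ω, κ ω = ⊤ → ∃ i, sigmai R i ω ≠ (0, 0) ∧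
      ∀ ω', sigmai R i ω' = sigmai R i ω → κ ω' = ⊤) ∧
  (∀ d : Ω → ℤ, (∀ ω, κ ω = ⊤ → d ω = 0) →
    ∑ ω, d ω = 0 → ∑ ω, d ω • sigmaR R ω = 0 →
    ∑ ω, d ω * ((κ ω).toNat : ℤ) = 0)

/-- If an OCF is indifferent w.r.t. `R`, then worlds with the same
conditional structure get the same rank (including infinite values). -/
theorem stmt2 {Ω : Type*} [Fintype Ω] [Nonempty Ω] {n : ℕ}
    (R : Fin n → Set Ω × Set Ω) (κ : Ω → ℕ∞) (hκ : ∃ ω, κ ω = 0)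
    (hind : Indifferent κ R) :
    ∀ ω₁ ω₂ : Ω, sigmaR R ω₁ = sigmaR R ω₂ → κ ω₁ = κ ω₂ := by

  intro ω₁ ω₂ h
  have hsig : ∀ i, sigmai R i ω₁ = sigmai R i ω₂ := by
    intro i; unfold sigmai; rw [h]
  obtain ⟨h1, h2⟩ := hind
  by_cases ht1 : κ ω₁ = ⊤
  · obtain ⟨i, _, hall⟩ := h1 ω₁ ht1
    rw [ht1, hall ω₂ (hsig i).symm]
  by_cases ht2 : κ ω₂ = ⊤
  · obtain ⟨i, _, hall⟩ := h1 ω₂ ht2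
    rw [ht2, hall ω₁ (hsig i)]
  by_cases heq : ω₁ = ω₂
  · rw [heq]
  set d : Ω → ℤ := fun ω => (if ω = ω₁ then (1:ℤ) else 0) - (if ω = ω₂ then 1 else 0) with hd
  have hd0 : ∀ ω, κ ω = ⊤ → d ω = 0 := by
    intro ω hω
    simp only [hd]
    rcases eq_or_ne ω ω₁ with rfl | h1'
    · exact absurd hω ht1
    rcases eq_or_ne ω ω₂ with rfl | h2'
    · exact absurd hω ht2
    simp [h1', h2']
  have hsum : ∑ ω, d ω = 0 := by
    simp only [hd, Finset.sum_sub_distrib, Finset.sum_ite_eq', Finset.mem_univ, if_true,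
      sub_self]
  have hsum2 : ∑ ω, d ω • sigmaR R ω = 0 := by
    simp only [hd, sub_smul, Finset.sum_sub_distrib, ite_smul, one_smul, zero_smul,
      Finset.sum_ite_eq', Finset.mem_univ, if_true, h, sub_self]
  have key := h2 d hd0 hsum hsum2
  have : ((κ ω₁).toNat : ℤ) = ((κ ω₂).toNat : ℤ) := by
    have : ∑ ω, d ω * ((κ ω).toNat : ℤ)
        = ((κ ω₁).toNat : ℤ) - ((κ ω₂).toNat : ℤ) := by
      simp only [hd, sub_mul, Finset.sum_sub_distrib, ite_mul, one_mul, zero_mul,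
        Finset.sum_ite_eq', Finset.mem_univ, if_true]
    rw [this] at key
    linarith
  have hnat : (κ ω₁).toNat = (κ ω₂).toNat := by exact_mod_cast this
  rw [← ENat.coe_toNat ht1, ← ENat.coe_toNat ht2, hnat]
end

section
/- Let R = ((A_i, B_i))_{i<n} be a finite family of conditionals over Ω with A_i∩B_i ≠ ∅ and A_i∩B_iᶜ ≠ ∅ for every i, and let κ : Ω → ℕ be a finite-valued OCF. Then κ is a c-representation of R if and only if there exist rational numbers κ₀ and κ_i⁺, κ_i⁻ (i < n) such that (a) for every world ω, (κ(ω) : ℚ) = κ₀ + Σ_{i : ω ∈ A_i∩B_i} κ_i⁺ + Σ_{i : ω ∈ A_i∩B_iᶜ} κ_i⁻, and (b) for every i < n, κ_i⁻ − κ_i⁺ > min_{ω ∈ A_i∩B_i} (Σ_{j≠i, ω ∈ A_j∩B_j} κ_j⁺ + Σ_{j≠i, ω ∈ A_j∩B_jᶜ} κ_j⁻) − min_{ω ∈ A_i∩B_iᶜ} (Σ_{j≠i, ω ∈ A_j∩B_j} κ_j⁺ + Σ_{j≠i, ω ∈ A_j∩B_jᶜ} κ_j⁻). -/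
open scoped Classical

/-- The rank of a set of worlds under a finite-valued OCF (in `ℕ∞`,
so that the empty set gets rank `∞`). -/
noncomputable def ocfRankN {Ω : Type*} (κ : Ω → ℕ) (S : Set Ω) : ℕ∞ :=
  ⨅ ω ∈ S, (κ ω : ℕ∞)

/-- A finite-valued OCF `κ` accepts the conditional `(B|A)` iff
`κ(A∩B) < κ(A∩Bᶜ)`. -/
noncomputable def Accepts {Ω : Type*} (κ : Ω → ℕ) (A B : Set Ω) : Prop :=
  ocfRankN κ (A ∩ B) < ocfRankN κ (A ∩ Bᶜ)

/-- A finite-valued OCF is indifferent with respect to `R`. -/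
noncomputable def IndifferentFin {Ω : Type*} [Fintype Ω] {n : ℕ}
    (κ : Ω → ℕ) (R : Fin n → Set Ω × Set Ω) : Prop :=
  ∀ d : Ω → ℤ, ∑ ω, d ω = 0 → ∑ ω, d ω • sigmaR R ω = 0 →
    ∑ ω, d ω * (κ ω : ℤ) = 0

/-- `κ` is a c-representation of `R`: it accepts every conditional of `R`
and is indifferent with respect to `R`. -/
noncomputable def CRepresentation {Ω : Type*} [Fintype Ω] {n : ℕ}
    (κ : Ω → ℕ) (R : Fin n → Set Ω × Set Ω) : Prop :=
  (∀ i, Accepts κ (R i).1 (R i).2) ∧ IndifferentFin κ R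

/-!
Indifference says that the integer vectors orthogonal to the constant function `1` and to the
indicators of the verifying and falsifying sets `AᵢBᵢ`, `Aᵢ¬Bᵢ` are orthogonal to `κ`. Clearing
denominators turns this into the same statement over `ℚ`, and by duality it means that `κ` lies in
the `ℚ`-span of these functions, i.e. `κ = κ₀ + Σ κᵢ⁺ + Σ κᵢ⁻`. Given such a decomposition, every
world of `AᵢBᵢ` (resp. `Aᵢ¬Bᵢ`) has rank `κ₀ + κᵢ⁺` (resp. `κ₀ + κᵢ⁻`) plus the impacts of the
other conditionals, so acceptance of `(Bᵢ|Aᵢ)` is exactly the inequality for `κᵢ⁻ - κᵢ⁺`.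
-/

open Finset Submodule Set

section DotProductSpan

variable {Ω ι : Type*} [Fintype Ω] [Finite ι]

theorem mem_span_range_iff_forall_dotProduct {K : Type*} [Field K] (g : ι → Ω → K)
    (f : Ω → K) :
    f ∈ span K (range g) ↔ ∀ d : Ω → K, (∀ i, d ⬝ᵥ g i = 0) → d ⬝ᵥ f = 0 := by
  constructor
  · intro hf d hd
    have hle : span K (range g) ≤ LinearMap.ker (dotProductEquiv K Ω d) :=
      span_le.mpr (range_subset_iff.mpr fun i => by simpa using hd i)
    simpa using hle hf
  · intro h
    rw [← apply_mem_span_image_iff_mem_span (f := (dotProductEquiv K Ω).toLinearMap)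
      (dotProductEquiv K Ω).injective, ← range_comp]
    refine mem_span_of_iInf_ker_le_ker fun d hd => ?_
    simp only [Submodule.mem_iInf, LinearMap.mem_ker, Function.comp_apply,
      LinearEquiv.coe_coe, dotProductEquiv_apply_apply] at hd ⊢
    rw [dotProduct_comm]
    exact h d fun i => by rw [dotProduct_comm]; exact hd i

theorem exists_intCast_eq_smul (q : Ω → ℚ) :
    ∃ N : ℤ, N ≠ 0 ∧ ∃ D : Ω → ℤ, Int.cast ∘ D = (N : ℚ) • q := by
  obtain ⟨⟨N, hN⟩, hD⟩ := IsLocalization.exist_integer_multiples_of_finite (nonZeroDivisors ℤ) q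
  choose D hD using hD
  refine ⟨N, nonZeroDivisors.ne_zero hN, D, funext fun ω => ?_⟩
  simpa using hD ω

theorem intCast_dotProduct (v w : Ω → ℤ) :
    ((v ⬝ᵥ w : ℤ) : ℚ) = (Int.cast ∘ v) ⬝ᵥ (Int.cast ∘ w) := by
  simpa using (Int.castRingHom ℚ).map_dotProduct v w

theorem intCast_mem_span_range_iff_forall_dotProduct (g : ι → Ω → ℤ) (f : Ω → ℤ) :
    (Int.cast ∘ f : Ω → ℚ) ∈ span ℚ (range fun i => (Int.cast ∘ g i : Ω → ℚ)) ↔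
      ∀ d : Ω → ℤ, (∀ i, d ⬝ᵥ g i = 0) → d ⬝ᵥ f = 0 := by
  rw [mem_span_range_iff_forall_dotProduct]
  constructor
  · intro h d hd
    exact_mod_cast (intCast_dotProduct d f).trans
      (h _ fun i => by rw [← intCast_dotProduct, hd i, Int.cast_zero])
  · intro h q hq
    obtain ⟨N, hN, D, hD⟩ := exists_intCast_eq_smul q
    have hDg : ∀ i, D ⬝ᵥ g i = 0 := fun i => by
      have : ((D ⬝ᵥ g i : ℤ) : ℚ) = 0 := by
        rw [intCast_dotProduct, hD, smul_dotProduct, hq i, smul_zero]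
      exact_mod_cast this
    have hDf : (N : ℚ) * (q ⬝ᵥ Int.cast ∘ f) = 0 := by
      rw [← smul_eq_mul, ← smul_dotProduct, ← hD, ← intCast_dotProduct, h D hDg, Int.cast_zero]
    exact (mul_eq_zero.mp hDf).resolve_left (by exact_mod_cast hN)

end DotProductSpan

theorem Finset.add_inf' {α ι : Type*} [AddGroup α] [LinearOrder α] [AddLeftMono α]
    (s : Finset ι) (hs : s.Nonempty) (c : α) (f : ι → α) :
    c + s.inf' hs f = s.inf' hs fun a => c + f a :=
  map_finset_inf' (OrderIso.addLeft c) hs f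

theorem filter_ne_and_eq_erase {ι : Type*} [Fintype ι] [DecidableEq ι] (P : ι → Prop)
    [DecidablePred P] (i : ι) :
    Finset.univ.filter (fun j => j ≠ i ∧ P j) = (Finset.univ.filter P).erase i := by
  ext j
  simp

section CRepresentation

variable {Ω : Type*} {n : ℕ}

/-- `sigmaR R` with an extra constant coordinate `1` at `none`, which encodes the constraint
`∑ ω, d ω = 0` of indifference. -/
noncomputable def sigmaCoord (R : Fin n → Set Ω × Set Ω) (o : Option (Fin n ⊕ Fin n)) (ω : Ω) :
    ℤ :=
  o.elim 1 (Sum.elim (sigmaR R ω).1 (sigmaR R ω).2)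

theorem indifferentFin_iff_forall_dotProduct_sigmaCoord [Fintype Ω] (κ : Ω → ℕ)
    (R : Fin n → Set Ω × Set Ω) :
    IndifferentFin κ R ↔
      ∀ d : Ω → ℤ, (∀ o, d ⬝ᵥ sigmaCoord R o = 0) → d ⬝ᵥ (fun ω => (κ ω : ℤ)) = 0 := by
  have hσ : ∀ d : Ω → ℤ, (∀ o, d ⬝ᵥ sigmaCoord R o = 0) ↔
      ∑ ω, d ω = 0 ∧ ∑ ω, d ω • sigmaR R ω = 0 := fun d => by
    simp [Option.forall, Sum.forall, sigmaCoord, dotProduct, Prod.ext_iff, funext_iff,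
      Prod.fst_sum, Prod.snd_sum, Finset.sum_apply]
  simp only [IndifferentFin, hσ, and_imp]
  rfl

noncomputable def cRank (R : Fin n → Set Ω × Set Ω) (κ₀ : ℚ) (kp km : Fin n → ℚ) (ω : Ω) : ℚ :=
  κ₀ + (∑ i ∈ Finset.univ.filter fun i => ω ∈ (R i).1 ∩ (R i).2, kp i) +
    (∑ i ∈ Finset.univ.filter fun i => ω ∈ (R i).1 ∩ ((R i).2)ᶜ, km i)

theorem sum_smul_sigmaCoord (R : Fin n → Set Ω × Set Ω) (c : Option (Fin n ⊕ Fin n) → ℚ) :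
    ∑ o, c o • (Int.cast ∘ sigmaCoord R o : Ω → ℚ) =
      cRank R (c none) (fun i => c (some (.inl i))) (fun i => c (some (.inr i))) := by
  ext ω
  simp [cRank, sigmaCoord, sigmaR, Fintype.sum_option, Fintype.sum_sum_type, Finset.sum_filter,
    add_assoc]

theorem mem_span_sigmaCoord_iff [Fintype Ω] (R : Fin n → Set Ω × Set Ω) (f : Ω → ℚ) :
    f ∈ span ℚ (range fun o => (Int.cast ∘ sigmaCoord R o : Ω → ℚ)) ↔
      ∃ (κ₀ : ℚ) (kp km : Fin n → ℚ), f = cRank R κ₀ kp km := by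
  rw [mem_span_range_iff_exists_fun]
  constructor
  · rintro ⟨c, rfl⟩
    exact ⟨_, _, _, sum_smul_sigmaCoord R c⟩
  · rintro ⟨κ₀, kp, km, rfl⟩
    exact ⟨fun o => o.elim κ₀ (Sum.elim kp km), sum_smul_sigmaCoord R _⟩

theorem indifferentFin_iff_exists_cRank [Fintype Ω] (κ : Ω → ℕ) (R : Fin n → Set Ω × Set Ω) :
    IndifferentFin κ R ↔
        ∃ (κ₀ : ℚ) (kp km : Fin n → ℚ), ∀ ω, (κ ω : ℚ) = cRank R κ₀ kp km ω := by
  rw [indifferentFin_iff_forall_dotProduct_sigmaCoord,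
    ← intCast_mem_span_range_iff_forall_dotProduct, mem_span_sigmaCoord_iff]
  simp only [funext_iff, Function.comp_apply, Int.cast_natCast]

noncomputable def otherImpacts (R : Fin n → Set Ω × Set Ω) (kp km : Fin n → ℚ) (i : Fin n)
    (ω : Ω) : ℚ :=
  (∑ j ∈ Finset.univ.filter fun j => j ≠ i ∧ ω ∈ (R j).1 ∩ (R j).2, kp j) +
    (∑ j ∈ Finset.univ.filter fun j => j ≠ i ∧ ω ∈ (R j).1 ∩ ((R j).2)ᶜ, km j)

theorem cRank_of_mem_verif {R : Fin n → Set Ω × Set Ω} {i : Fin n} {ω : Ω}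
    (h : ω ∈ (R i).1 ∩ (R i).2) (κ₀ : ℚ) (kp km : Fin n → ℚ) :
    cRank R κ₀ kp km ω = κ₀ + kp i + otherImpacts R kp km i ω := by
  have hF : ω ∉ (R i).1 ∩ ((R i).2)ᶜ := fun h' => h'.2 h.2
  rw [cRank, otherImpacts, filter_ne_and_eq_erase, filter_ne_and_eq_erase,
    Finset.erase_eq_of_notMem (s := Finset.univ.filter fun j => ω ∈ (R j).1 ∩ ((R j).2)ᶜ)
      (by simpa using hF), ← Finset.add_sum_erase _ kp (by simpa using h)]
  ring

theorem cRank_of_mem_falsif {R : Fin n → Set Ω × Set Ω} {i : Fin n} {ω : Ω}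
    (h : ω ∈ (R i).1 ∩ ((R i).2)ᶜ) (κ₀ : ℚ) (kp km : Fin n → ℚ) :
    cRank R κ₀ kp km ω = κ₀ + km i + otherImpacts R kp km i ω := by
  have hV : ω ∉ (R i).1 ∩ (R i).2 := fun h' => h.2 h'.2
  rw [cRank, otherImpacts, filter_ne_and_eq_erase, filter_ne_and_eq_erase,
    Finset.erase_eq_of_notMem (s := Finset.univ.filter fun j => ω ∈ (R j).1 ∩ (R j).2)
        (by simpa using hV), ← Finset.add_sum_erase _ km (by simpa using h)]
  ring

theorem ocfRankN_eq_inf' (κ : Ω → ℕ) (S : Set Ω) [Fintype S] (h : S.Nonempty) :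
    ocfRankN κ S = S.toFinset.inf' (Set.toFinset_nonempty.mpr h) κ := by
  rw [Finset.apply_inf'_eq_inf'_comp _ _ fun a b => Nat.mono_cast.map_min, Finset.inf'_eq_inf,
    Finset.inf_eq_iInf, ocfRankN]
  simp

theorem accepts_iff_inf'_lt [Fintype Ω] (κ : Ω → ℕ) {A B : Set Ω} (h₁ : (A ∩ B).Nonempty)
    (h₂ : (A ∩ Bᶜ).Nonempty) :
    Accepts κ A B ↔
      (A ∩ B).toFinset.inf' (Set.toFinset_nonempty.mpr h₁) (fun ω => (κ ω : ℚ)) <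
        (A ∩ Bᶜ).toFinset.inf' (Set.toFinset_nonempty.mpr h₂) (fun ω => (κ ω : ℚ)) := by
  rw [Accepts, ocfRankN_eq_inf' κ _ h₁, ocfRankN_eq_inf' κ _ h₂, Nat.cast_lt,
    ← Nat.cast_lt (α := ℚ), Nat.cast_finsetInf', Nat.cast_finsetInf']

theorem accepts_iff_sub_gt [Fintype Ω] {κ : Ω → ℕ} {R : Fin n → Set Ω × Set Ω} {κ₀ : ℚ}
    {kp km : Fin n → ℚ} (hκ : ∀ ω, (κ ω : ℚ) = cRank R κ₀ kp km ω) (i : Fin n)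
    (h₁ : ((R i).1 ∩ (R i).2).Nonempty) (h₂ : ((R i).1 ∩ ((R i).2)ᶜ).Nonempty) :
    Accepts κ (R i).1 (R i).2 ↔
      km i - kp i >
        ((R i).1 ∩ (R i).2).toFinset.inf' (Set.toFinset_nonempty.mpr h₁)
            (otherImpacts R kp km i) -
          ((R i).1 ∩ ((R i).2)ᶜ).toFinset.inf' (Set.toFinset_nonempty.mpr h₂)
            (otherImpacts R kp km i) := by
  have hverif : ((R i).1 ∩ (R i).2).toFinset.inf' (Set.toFinset_nonempty.mpr h₁)
      (fun ω => (κ ω : ℚ)) =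
      κ₀ + kp i + ((R i).1 ∩ (R i).2).toFinset.inf' (Set.toFinset_nonempty.mpr h₁)
        (otherImpacts R kp km i) := by
    rw [Finset.add_inf']
    exact Finset.inf'_congr _ rfl fun ω hω => by
      rw [hκ, cRank_of_mem_verif (Set.mem_toFinset.mp hω)]
  have hfalsif : ((R i).1 ∩ ((R i).2)ᶜ).toFinset.inf' (Set.toFinset_nonempty.mpr h₂)
      (fun ω => (κ ω : ℚ)) =
      κ₀ + km i + ((R i).1 ∩ ((R i).2)ᶜ).toFinset.inf' (Set.toFinset_nonempty.mpr h₂)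
        (otherImpacts R kp km i) := by
    rw [Finset.add_inf']
    exact Finset.inf'_congr _ rfl fun ω hω => by
      rw [hκ, cRank_of_mem_falsif (Set.mem_toFinset.mp hω)]
  rw [accepts_iff_inf'_lt κ h₁ h₂, hverif, hfalsif]
  constructor <;> intro h <;> linarith

end CRepresentation

theorem stmt5_general {Ω : Type*} [Fintype Ω] {n : ℕ}
    (R : Fin n → Set Ω × Set Ω)
    (hne : ∀ i, ((R i).1 ∩ (R i).2).Nonempty ∧ ((R i).1 ∩ ((R i).2)ᶜ).Nonempty)
    (κ : Ω → ℕ) :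
    CRepresentation κ R ↔
      ∃ (κ₀ : ℚ) (kp km : Fin n → ℚ),
        (∀ ω, (κ ω : ℚ) = κ₀ +
          (∑ i ∈ Finset.univ.filter fun i => ω ∈ (R i).1 ∩ (R i).2, kp i) +
          (∑ i ∈ Finset.univ.filter fun i => ω ∈ (R i).1 ∩ ((R i).2)ᶜ, km i)) ∧
        (∀ i, km i - kp i >
          Finset.inf' ((R i).1 ∩ (R i).2).toFinset
            (Set.toFinset_nonempty.mpr (hne i).1)
            (fun ω =>
              (∑ j ∈ Finset.univ.filter fun j => j ≠ i ∧ ω ∈ (R j).1 ∩ (R j).2, kp j) +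
              (∑ j ∈ Finset.univ.filter fun j => j ≠ i ∧ ω ∈ (R j).1 ∩ ((R j).2)ᶜ, km j)) -
          Finset.inf' ((R i).1 ∩ ((R i).2)ᶜ).toFinset
            (Set.toFinset_nonempty.mpr (hne i).2)
            (fun ω =>
              (∑ j ∈ Finset.univ.filter fun j => j ≠ i ∧ ω ∈ (R j).1 ∩ (R j).2, kp j) +
              (∑ j ∈ Finset.univ.filter fun j => j ≠ i ∧ ω ∈ (R j).1 ∩ ((R j).2)ᶜ, km j))) := by
  constructor
  · rintro ⟨hacc, hind⟩
    obtain ⟨κ₀, kp, km, hκ⟩ := (indifferentFin_iff_exists_cRank κ R).mp hind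
    exact ⟨κ₀, kp, km, hκ, fun i => (accepts_iff_sub_gt hκ i (hne i).1 (hne i).2).mp (hacc i)⟩
  · rintro ⟨κ₀, kp, km, hκ, hgt⟩
    exact ⟨fun i => (accepts_iff_sub_gt hκ i (hne i).1 (hne i).2).mpr (hgt i),
      (indifferentFin_iff_exists_cRank κ R).mpr ⟨κ₀, kp, km, hκ⟩⟩

/-- Characterization of c-representations: `κ` is a c-representation of `R`
iff `κ` decomposes additively into constants `κ₀, κᵢ⁺, κᵢ⁻` satisfying the
acceptance inequalities `κᵢ⁻ − κᵢ⁺ > min_{ω ⊨ AᵢBᵢ}(…) − min_{ω ⊨ Aᵢ¬Bᵢ}(…)`. -/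
theorem stmt5 {Ω : Type*} [Fintype Ω] [Nonempty Ω] {n : ℕ}
    (R : Fin n → Set Ω × Set Ω)
    (hne : ∀ i, ((R i).1 ∩ (R i).2).Nonempty ∧ ((R i).1 ∩ ((R i).2)ᶜ).Nonempty)
    (κ : Ω → ℕ) (hκ : ∃ ω, κ ω = 0) :
    CRepresentation κ R ↔
      ∃ (κ₀ : ℚ) (kp km : Fin n → ℚ),
        (∀ ω, (κ ω : ℚ) = κ₀ +
          (∑ i ∈ Finset.univ.filter fun i => ω ∈ (R i).1 ∩ (R i).2, kp i) +
          (∑ i ∈ Finset.univ.filter fun i => ω ∈ (R i).1 ∩ ((R i).2)ᶜ, km i)) ∧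
        (∀ i, km i - kp i >
          Finset.inf' ((R i).1 ∩ (R i).2).toFinset
            (Set.toFinset_nonempty.mpr (hne i).1)
            (fun ω =>
              (∑ j ∈ Finset.univ.filter fun j => j ≠ i ∧ ω ∈ (R j).1 ∩ (R j).2, kp j) +
              (∑ j ∈ Finset.univ.filter fun j => j ≠ i ∧ ω ∈ (R j).1 ∩ ((R j).2)ᶜ, km j)) -
          Finset.inf' ((R i).1 ∩ ((R i).2)ᶜ).toFinset
            (Set.toFinset_nonempty.mpr (hne i).2)
            (fun ω =>
              (∑ j ∈ Finset.univ.filter fun j => j ≠ i ∧ ω ∈ (R j).1 ∩ (R j).2, kp j) +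
              (∑ j ∈ Finset.univ.filter fun j => j ≠ i ∧ ω ∈ (R j).1 ∩ ((R j).2)ᶜ, km j))) :=
  stmt5_general R hne κ
end

section
/- Let R = ((A_i, B_i))_{i<n} be a finite family of conditionals over Ω with A_i∩B_i ≠ ∅ and A_i∩B_iᶜ ≠ ∅ for every i, and suppose there exists a world ω₀ with σ_R(ω₀) = 0. Let κ_1⁻, …, κ_n⁻ be natural numbers such that for every i < n (as integers): κ_i⁻ > min_{ω ∈ A_i∩B_i} (Σ_{j≠i, ω ∈ A_j∩B_jᶜ} κ_j⁻) − min_{ω ∈ A_i∩B_iᶜ} (Σ_{j≠i, ω ∈ A_j∩B_jᶜ} κ_j⁻). Then the function κ : Ω → ℕ defined by κ(ω) = Σ_{i : ω ∈ A_i∩B_iᶜ} κ_i⁻ is a finite-valued OCF and a c-representation of R. -/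
open scoped Classical

/-- The construction scheme for c-representations: if the constants `κᵢ⁻`
satisfy the reduced acceptance inequalities, then
`κ(ω) = Σ_{i : ω ⊨ Aᵢ¬Bᵢ} κᵢ⁻` is a finite-valued OCF that is a
c-representation of `R`. -/
theorem stmt6 {Ω : Type*} [Fintype Ω] [Nonempty Ω] {n : ℕ}
    (R : Fin n → Set Ω × Set Ω)
    (hne : ∀ i, ((R i).1 ∩ (R i).2).Nonempty ∧ ((R i).1 ∩ ((R i).2)ᶜ).Nonempty)
    (ω₀ : Ω) (hω₀ : sigmaR R ω₀ = 0)
    (km : Fin n → ℕ)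
    (hkm : ∀ i, (km i : ℤ) >
      Finset.inf' ((R i).1 ∩ (R i).2).toFinset
        (Set.toFinset_nonempty.mpr (hne i).1)
        (fun ω => ∑ j ∈ Finset.univ.filter
            fun j => j ≠ i ∧ ω ∈ (R j).1 ∩ ((R j).2)ᶜ, (km j : ℤ)) -
      Finset.inf' ((R i).1 ∩ ((R i).2)ᶜ).toFinset
        (Set.toFinset_nonempty.mpr (hne i).2)
        (fun ω => ∑ j ∈ Finset.univ.filter
            fun j => j ≠ i ∧ ω ∈ (R j).1 ∩ ((R j).2)ᶜ, (km j : ℤ))) :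
    (∃ ω, (∑ i ∈ Finset.univ.filter fun i => ω ∈ (R i).1 ∩ ((R i).2)ᶜ, km i) = 0) ∧
    CRepresentation
      (fun ω => ∑ i ∈ Finset.univ.filter fun i => ω ∈ (R i).1 ∩ ((R i).2)ᶜ, km i) R := by
  classical
  set κ : Ω → ℕ := fun ω => ∑ i ∈ Finset.univ.filter fun i => ω ∈ (R i).1 ∩ ((R i).2)ᶜ, km i
    with hκdef
  constructor
  · refine ⟨ω₀, ?_⟩
    have hempty : (Finset.univ.filter fun i => ω₀ ∈ (R i).1 ∩ ((R i).2)ᶜ) = ∅ := by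
      rw [Finset.filter_eq_empty_iff]
      intro i _ hi
      have h2 := congrFun (congrArg Prod.snd hω₀) i
      simp only [sigmaR, Pi.zero_apply, Prod.snd_zero] at h2
      rw [if_pos hi] at h2
      exact one_ne_zero h2
    rw [hempty, Finset.sum_empty]
  constructor
  · -- acceptance
    intro i
    set g : Ω → ℤ := fun ω => ∑ j ∈ Finset.univ.filter
        fun j => j ≠ i ∧ ω ∈ (R j).1 ∩ ((R j).2)ᶜ, (km j : ℤ) with hgdef
    set gN : Ω → ℕ := fun ω => ∑ j ∈ Finset.univ.filter
        fun j => j ≠ i ∧ ω ∈ (R j).1 ∩ ((R j).2)ᶜ, km j with hgNdef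
    have hg : ∀ ω, g ω = (gN ω : ℤ) := by
      intro ω
      rw [hgdef, hgNdef, Nat.cast_sum]
    obtain ⟨ω₁, hω₁mem, hω₁eq⟩ :=
      Finset.exists_mem_eq_inf' (Set.toFinset_nonempty.mpr (hne i).1) g
    have hω₁set : ω₁ ∈ (R i).1 ∩ (R i).2 := Set.mem_toFinset.mp hω₁mem
    -- κ ω₁ = gN ω₁
    have hκω₁ : κ ω₁ = gN ω₁ := by
      have hfil : (Finset.univ.filter fun j => ω₁ ∈ (R j).1 ∩ ((R j).2)ᶜ)
          = Finset.univ.filter fun j => j ≠ i ∧ ω₁ ∈ (R j).1 ∩ ((R j).2)ᶜ := by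
        apply Finset.filter_congr
        intro j _
        constructor
        · intro hj
          refine ⟨?_, hj⟩
          rintro rfl
          exact hj.2 hω₁set.2
        · exact fun hj => hj.2
      rw [hκdef, hgNdef]
      simp only
      rw [hfil]
    -- for ω in A ∩ Bᶜ : κ ω = km i + gN ω
    have hκneg : ∀ ω ∈ (R i).1 ∩ ((R i).2)ᶜ, κ ω = km i + gN ω := by
      intro ω hω
      have hi : i ∈ Finset.univ.filter fun j => ω ∈ (R j).1 ∩ ((R j).2)ᶜ := by
        simp only [Finset.mem_filter, Finset.mem_univ, true_and]
        exact hω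
      have hdiff : (Finset.univ.filter fun j => ω ∈ (R j).1 ∩ ((R j).2)ᶜ) \ {i}
          = Finset.univ.filter fun j => j ≠ i ∧ ω ∈ (R j).1 ∩ ((R j).2)ᶜ := by
        ext j
        simp only [Finset.mem_sdiff, Finset.mem_filter, Finset.mem_univ, true_and,
          Finset.mem_singleton]
        tauto
      have hs := Finset.sum_eq_sum_sdiff_singleton_add hi (fun j => km j)
      rw [hκdef, hgNdef]
      simp only
      rw [hs, hdiff]
      ring
    -- strict inequality between κ ω₁ and κ ω for ω ∈ A∩Bᶜ
    have hlt : ∀ ω ∈ (R i).1 ∩ ((R i).2)ᶜ, κ ω₁ < κ ω := by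
      intro ω hω
      have hinf2 : Finset.inf' ((R i).1 ∩ ((R i).2)ᶜ).toFinset
          (Set.toFinset_nonempty.mpr (hne i).2) g ≤ g ω :=
        Finset.inf'_le g (Set.mem_toFinset.mpr hω)
      have hk := hkm i
      rw [← hgdef] at hk
      rw [hω₁eq] at hk
      have hz : (κ ω₁ : ℤ) < (κ ω : ℤ) := by
        rw [hκω₁, hκneg ω hω]
        push_cast
        rw [← hg, ← hg]
        linarith
      exact_mod_cast hz
    -- conclude Accepts
    have hle : ocfRankN κ ((R i).1 ∩ (R i).2) ≤ (κ ω₁ : ℕ∞) :=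
      iInf₂_le ω₁ hω₁set
    have hgt : ((κ ω₁ : ℕ) : ℕ∞) < ocfRankN κ ((R i).1 ∩ ((R i).2)ᶜ) := by
      have h1' : ((κ ω₁ : ℕ) : ℕ∞) < ((κ ω₁ + 1 : ℕ) : ℕ∞) := by
        exact_mod_cast Nat.lt_succ_self _
      refine lt_of_lt_of_le h1' (le_iInf₂ fun ω hω => ?_)
      exact_mod_cast Nat.succ_le_of_lt (hlt ω hω)
    exact lt_of_le_of_lt hle hgt
  · -- indifference
    intro d hd0 hdσ
    have key : ∀ ω, (κ ω : ℤ) = ∑ j, (sigmaR R ω).2 j * (km j : ℤ) := by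
      intro ω
      simp only [sigmaR, hκdef]
      rw [Nat.cast_sum, Finset.sum_filter]
      refine Finset.sum_congr rfl fun j _ => ?_
      by_cases h : ω ∈ (R j).1 ∩ ((R j).2)ᶜ <;> simp [h]
    have hcomp : ∀ j : Fin n, ∑ ω, d ω * (sigmaR R ω).2 j = 0 := by
      intro j
      have h2 := congrFun (congrArg Prod.snd hdσ) j
      simpa [Finset.sum_apply, Prod.snd_sum, smul_eq_mul] using h2
    calc ∑ ω, d ω * (κ ω : ℤ)
        = ∑ ω, ∑ j, d ω * ((sigmaR R ω).2 j * (km j : ℤ)) := by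
          refine Finset.sum_congr rfl fun ω _ => ?_
          rw [key ω, Finset.mul_sum]
      _ = ∑ j, (∑ ω, d ω * (sigmaR R ω).2 j) * (km j : ℤ) := by
          rw [Finset.sum_comm]
          refine Finset.sum_congr rfl fun j _ => ?_
          rw [Finset.sum_mul]
          refine Finset.sum_congr rfl fun ω _ => ?_
          ring
      _ = 0 := by
          refine Finset.sum_eq_zero fun j _ => ?_
          rw [hcomp j, zero_mul]
end

section
/- Let R = ((A_i, B_i))_{i<n} be a finite family of conditionals over Ω with A_i∩B_i ≠ ∅ and A_i∩B_iᶜ ≠ ∅ for every i, and suppose there exists a world ω₀ with σ_R(ω₀) = 0. Let z_1, …, z_n be natural numbers satisfying the system-Z* equations: for every i < n (as integers), z_i + min_{ω ∈ A_i∩B_iᶜ} (Σ_{j≠i, ω ∈ A_j∩B_jᶜ} z_j) = 1 + min_{ω ∈ A_i∩B_i} (Σ_{j≠i, ω ∈ A_j∩B_jᶜ} z_j). Then the function κ* : Ω → ℕ defined by κ*(ω) = Σ_{i : ω ∈ A_i∩B_iᶜ} z_i is a finite-valued OCF and a c-representation of R. -/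
open scoped Classical

/-- System-Z*: if the rankings `zᵢ` satisfy the system-Z* equations, then
`κ*(ω) = Σ_{i : ω ⊨ Aᵢ¬Bᵢ} zᵢ` is a finite-valued OCF that is a
c-representation of `R`. -/
theorem stmt7 {Ω : Type*} [Fintype Ω] [Nonempty Ω] {n : ℕ}
    (R : Fin n → Set Ω × Set Ω)
    (hne : ∀ i, ((R i).1 ∩ (R i).2).Nonempty ∧ ((R i).1 ∩ ((R i).2)ᶜ).Nonempty)
    (ω₀ : Ω) (hω₀ : sigmaR R ω₀ = 0)
    (z : Fin n → ℕ)
    (hz : ∀ i, (z i : ℤ) +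
      Finset.inf' ((R i).1 ∩ ((R i).2)ᶜ).toFinset
        (Set.toFinset_nonempty.mpr (hne i).2)
        (fun ω => ∑ j ∈ Finset.univ.filter
            fun j => j ≠ i ∧ ω ∈ (R j).1 ∩ ((R j).2)ᶜ, (z j : ℤ)) =
      1 +
      Finset.inf' ((R i).1 ∩ (R i).2).toFinset
        (Set.toFinset_nonempty.mpr (hne i).1)
        (fun ω => ∑ j ∈ Finset.univ.filter
            fun j => j ≠ i ∧ ω ∈ (R j).1 ∩ ((R j).2)ᶜ, (z j : ℤ))) :
    (∃ ω, (∑ i ∈ Finset.univ.filter fun i => ω ∈ (R i).1 ∩ ((R i).2)ᶜ, z i) = 0) ∧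
    CRepresentation
      (fun ω => ∑ i ∈ Finset.univ.filter fun i => ω ∈ (R i).1 ∩ ((R i).2)ᶜ, z i) R := by
  classical
  set κ : Ω → ℕ := fun ω => ∑ i ∈ Finset.univ.filter fun i => ω ∈ (R i).1 ∩ ((R i).2)ᶜ, z i
    with hκ
  have hω₀' : ∀ i, ω₀ ∉ (R i).1 ∩ ((R i).2)ᶜ := by
    intro i hi
    have h := congrFun (congrArg Prod.snd hω₀) i
    simp [sigmaR] at h
    exact hi.2 (h hi.1)
  constructor
  · refine ⟨ω₀, Finset.sum_eq_zero ?_⟩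
    intro i hi
    exact absurd (Finset.mem_filter.mp hi).2 (hω₀' i)
  constructor
  · -- Acceptance
    intro i
    set f : Ω → ℤ := fun ω => ∑ j ∈ Finset.univ.filter
        fun j => j ≠ i ∧ ω ∈ (R j).1 ∩ ((R j).2)ᶜ, (z j : ℤ) with hf
    have hAB : ∀ ω ∈ (R i).1 ∩ (R i).2, (κ ω : ℤ) = f ω := by
      intro ω hω
      simp only [hκ, hf]
      push_cast
      refine Finset.sum_congr ?_ (fun _ _ => rfl)
      apply Finset.filter_congr
      intro j _
      constructor
      · intro hj
        refine ⟨?_, hj⟩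
        rintro rfl
        exact hj.2 hω.2
      · exact fun h => h.2
    have hAnB : ∀ ω ∈ (R i).1 ∩ ((R i).2)ᶜ, (κ ω : ℤ) = (z i : ℤ) + f ω := by
      intro ω hω
      simp only [hκ, hf]
      push_cast
      have hmem : i ∈ Finset.univ.filter fun j => ω ∈ (R j).1 ∩ ((R j).2)ᶜ :=
        Finset.mem_filter.mpr ⟨Finset.mem_univ i, hω⟩
      have herase : (Finset.univ.filter fun j => ω ∈ (R j).1 ∩ ((R j).2)ᶜ).erase i =
          Finset.univ.filter fun j => j ≠ i ∧ ω ∈ (R j).1 ∩ ((R j).2)ᶜ := by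
        ext j
        simp [Finset.mem_erase, and_comm]
      rw [← Finset.add_sum_erase _ _ hmem, herase]
    obtain ⟨ω₁, hω₁S, hω₁⟩ := Finset.exists_mem_eq_inf'
      (Set.toFinset_nonempty.mpr (hne i).1) f
    have hω₁mem : ω₁ ∈ (R i).1 ∩ (R i).2 := Set.mem_toFinset.mp hω₁S
    have hzi := hz i
    rw [← hf, hω₁] at hzi
    have h1 : ocfRankN κ ((R i).1 ∩ (R i).2) ≤ (κ ω₁ : ℕ∞) :=
      iInf₂_le ω₁ hω₁mem
    have h2 : ((κ ω₁ : ℕ) + 1 : ℕ∞) ≤ ocfRankN κ ((R i).1 ∩ ((R i).2)ᶜ) := by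
      refine le_iInf₂ ?_
      intro ω hω
      have hineq : (κ ω₁ : ℤ) + 1 ≤ (κ ω : ℤ) := by
        have hfω : f ω ≥ Finset.inf' _ (Set.toFinset_nonempty.mpr (hne i).2) f :=
          Finset.inf'_le f (Set.mem_toFinset.mpr hω)
        have h3 := hAnB ω hω
        rw [h3, hAB ω₁ hω₁mem]
        linarith
      have hle : κ ω₁ + 1 ≤ κ ω := by exact_mod_cast hineq
      exact_mod_cast Nat.cast_le.mpr hle
    calc ocfRankN κ ((R i).1 ∩ (R i).2) ≤ (κ ω₁ : ℕ∞) := h1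
      _ < ((κ ω₁ : ℕ) + 1 : ℕ∞) := by exact_mod_cast lt_add_one (κ ω₁)
      _ ≤ ocfRankN κ ((R i).1 ∩ ((R i).2)ᶜ) := h2
  · -- Indifference
    intro d hd1 hd2
    have hcomp : ∀ i : Fin n,
        ∑ ω, d ω * (if ω ∈ (R i).1 ∩ ((R i).2)ᶜ then (1 : ℤ) else 0) = 0 := by
      intro i
      have h := congrFun (congrArg Prod.snd hd2) i
      simpa [sigmaR, Finset.sum_apply, Prod.snd_sum, smul_eq_mul] using h
    calc ∑ ω, d ω * (κ ω : ℤ)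
        = ∑ ω, ∑ i : Fin n, d ω * (if ω ∈ (R i).1 ∩ ((R i).2)ᶜ then (z i : ℤ) else 0) := by
          refine Finset.sum_congr rfl fun ω _ => ?_
          rw [← Finset.mul_sum]
          congr 1
          simp only [hκ]
          push_cast
          rw [Finset.sum_filter]
      _ = ∑ i : Fin n, (z i : ℤ) *
            ∑ ω, d ω * (if ω ∈ (R i).1 ∩ ((R i).2)ᶜ then (1 : ℤ) else 0) := by
          rw [Finset.sum_comm]
          refine Finset.sum_congr rfl fun i _ => ?_
          rw [Finset.mul_sum]
          refine Finset.sum_congr rfl fun ω _ => ?_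
          by_cases h : ω ∈ (R i).1 ∩ ((R i).2)ᶜ <;> simp [h] <;> ring
      _ = 0 := by
          refine Finset.sum_eq_zero fun i _ => ?_
          rw [hcomp i, mul_zero]
end

section
/- Let κ, κ* : Ω → ℕ be finite-valued OCFs and let (B|A) be a single conditional over Ω. Then κ* satisfies the principle of conditional preservation with respect to the singleton family {(B|A)} and κ if and only if the integer-valued relative change function ω ↦ κ*(ω) − κ(ω) is constant on A∩B, constant on A∩Bᶜ, and constant on Aᶜ. -/
open scoped Classical

/-- The conditional-structure map of the singleton family `{(B|A)}`:
`(1,0)` on `A∩B`, `(0,1)` on `A∩Bᶜ`, `(0,0)` on `Aᶜ`. -/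
noncomputable def sigma1 {Ω : Type*} (A B : Set Ω) (ω : Ω) : ℤ × ℤ :=
  if ω ∈ A then (if ω ∈ B then (1, 0) else (0, 1)) else (0, 0)

/-- For finite-valued OCFs `κ, κ*`, the revision `κ* = κ * {(B|A)}` satisfies
the principle of conditional preservation: the relative change function
`κ* − κ` is indifferent with respect to `{(B|A)}`. -/
noncomputable def CondPres1 {Ω : Type*} [Fintype Ω]
    (κ κs : Ω → ℕ) (A B : Set Ω) : Prop :=
  ∀ d : Ω → ℤ, ∑ ω, d ω = 0 → ∑ ω, d ω • sigma1 A B ω = 0 →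
    ∑ ω, d ω * ((κs ω : ℤ) - (κ ω : ℤ)) = 0

lemma pair_zero {Ω : Type*} [Fintype Ω] (κ κs : Ω → ℕ) (A B : Set Ω)
    (h : CondPres1 κ κs A B) (ω₁ ω₂ : Ω)
    (hσ : sigma1 A B ω₁ = sigma1 A B ω₂) :
    (κs ω₁ : ℤ) - (κ ω₁ : ℤ) = (κs ω₂ : ℤ) - (κ ω₂ : ℤ) := by
  classical
  have key := h (fun ω => (if ω = ω₁ then (1:ℤ) else 0) - (if ω = ω₂ then 1 else 0)) ?_ ?_
  · have : ((κs ω₁ : ℤ) - (κ ω₁ : ℤ)) - ((κs ω₂ : ℤ) - (κ ω₂ : ℤ)) = 0 := by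
      simpa [sub_mul, ite_mul, Finset.sum_sub_distrib] using key
    linarith
  · simp [Finset.sum_sub_distrib]
  · simp [sub_smul, ite_smul, Finset.sum_sub_distrib, hσ]

/-- For a single conditional `(B|A)`, the principle of conditional
preservation holds iff the relative change function `κ* − κ` is constant on
each of `A∩B`, `A∩Bᶜ` and `Aᶜ`. -/
theorem stmt8 {Ω : Type*} [Fintype Ω] [Nonempty Ω]
    (κ κs : Ω → ℕ) (hκ : ∃ ω, κ ω = 0) (hκs : ∃ ω, κs ω = 0)
    (A B : Set Ω) :
    CondPres1 κ κs A B ↔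
      ((∀ ω₁ ∈ A ∩ B, ∀ ω₂ ∈ A ∩ B,
          (κs ω₁ : ℤ) - (κ ω₁ : ℤ) = (κs ω₂ : ℤ) - (κ ω₂ : ℤ)) ∧
       (∀ ω₁ ∈ A ∩ Bᶜ, ∀ ω₂ ∈ A ∩ Bᶜ,
          (κs ω₁ : ℤ) - (κ ω₁ : ℤ) = (κs ω₂ : ℤ) - (κ ω₂ : ℤ)) ∧
       (∀ ω₁ ∈ Aᶜ, ∀ ω₂ ∈ Aᶜ,
          (κs ω₁ : ℤ) - (κ ω₁ : ℤ) = (κs ω₂ : ℤ) - (κ ω₂ : ℤ))) := by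
  classical
  set f : Ω → ℤ := fun ω => (κs ω : ℤ) - (κ ω : ℤ) with hf
  constructor
  · intro h
    refine ⟨?_, ?_, ?_⟩
    · rintro ω₁ ⟨hA₁, hB₁⟩ ω₂ ⟨hA₂, hB₂⟩
      exact pair_zero κ κs A B h ω₁ ω₂ (by simp [sigma1, hA₁, hB₁, hA₂, hB₂])
    · rintro ω₁ ⟨hA₁, hB₁⟩ ω₂ ⟨hA₂, hB₂⟩
      have h₁ : ω₁ ∉ B := hB₁
      have h₂ : ω₂ ∉ B := hB₂
      exact pair_zero κ κs A B h ω₁ ω₂ (by simp [sigma1, hA₁, hA₂, h₁, h₂])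
    · intro ω₁ hA₁ ω₂ hA₂
      have h₁ : ω₁ ∉ A := hA₁
      have h₂ : ω₂ ∉ A := hA₂
      exact pair_zero κ κs A B h ω₁ ω₂ (by simp [sigma1, h₁, h₂])
  · rintro ⟨hAB, hABc, hAc⟩ d hd hσ
    set a : ℤ := if h : ∃ ω, ω ∈ A ∩ B then f h.choose else 0 with ha
    set b : ℤ := if h : ∃ ω, ω ∈ A ∩ Bᶜ then f h.choose else 0 with hb
    set c : ℤ := if h : ∃ ω, ω ∈ Aᶜ then f h.choose else 0 with hc
    have key : ∀ ω, f ω = a * (sigma1 A B ω).1 + b * (sigma1 A B ω).2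
        + c * (1 - (sigma1 A B ω).1 - (sigma1 A B ω).2) := by
      intro ω
      by_cases hA : ω ∈ A
      · by_cases hB : ω ∈ B
        · have hex : ∃ ω, ω ∈ A ∩ B := ⟨ω, hA, hB⟩
          have haω : a = f ω := by
            rw [ha, dif_pos hex]; exact hAB _ hex.choose_spec ω ⟨hA, hB⟩
          simp [sigma1, hA, hB, haω]
        · have hex : ∃ ω, ω ∈ A ∩ Bᶜ := ⟨ω, hA, hB⟩
          have hbω : b = f ω := by
            rw [hb, dif_pos hex]; exact hABc _ hex.choose_spec ω ⟨hA, hB⟩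
          simp [sigma1, hA, hB, hbω]
      · have hex : ∃ ω, ω ∈ Aᶜ := ⟨ω, hA⟩
        have hcω : c = f ω := by
          rw [hc, dif_pos hex]; exact hAc _ hex.choose_spec ω hA
        simp [sigma1, hA, hcω]
    have h1 : ∑ ω, d ω * (sigma1 A B ω).1 = 0 := by
      have := congrArg Prod.fst hσ
      simpa [Prod.fst_sum] using this
    have h2 : ∑ ω, d ω * (sigma1 A B ω).2 = 0 := by
      have := congrArg Prod.snd hσ
      simpa [Prod.snd_sum] using this
    have expand : ∑ ω, d ω * f ω =
        a * (∑ ω, d ω * (sigma1 A B ω).1) + b * (∑ ω, d ω * (sigma1 A B ω).2)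
        + c * ((∑ ω, d ω) - (∑ ω, d ω * (sigma1 A B ω).1)
            - (∑ ω, d ω * (sigma1 A B ω).2)) := by
      simp only [Finset.mul_sum, ← Finset.sum_sub_distrib, ← Finset.sum_add_distrib]
      refine Finset.sum_congr rfl fun ω _ => ?_
      rw [key ω]; ring
    calc ∑ ω, d ω * f ω = _ := expand
      _ = 0 := by rw [h1, h2, hd]; ring
end

section
/- Let κ, κ* : Ω → ℕ be finite-valued OCFs and (B|A) a conditional over Ω such that κ* satisfies the principle of conditional preservation with respect to {(B|A)} and κ (equivalently, κ* − κ is constant on each of A∩B, A∩Bᶜ, and Aᶜ). Let (D|C) be any conditional that is perpendicular to (B|A), i.e., C ⊆ A∩B or C ⊆ A∩Bᶜ or C ⊆ Aᶜ. Then κ accepts (D|C) if and only if κ* accepts (D|C). (This is postulate (CR5) for revisions satisfying the principle of conditional preservation.) -/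
open scoped Classical

/-- The conditional `(D|C)` is perpendicular to `(B|A)`. -/
def Perp {Ω : Type*} (C D A B : Set Ω) : Prop :=
  C ⊆ A ∩ B ∨ C ⊆ A ∩ Bᶜ ∨ C ⊆ Aᶜ


lemma rank_finset {Ω : Type*} [Fintype Ω] (κ : Ω → ℕ) (S : Set Ω) [DecidablePred (· ∈ S)] :
    ocfRankN κ S = S.toFinset.inf (fun ω => (κ ω : ℕ∞)) := by
  rw [ocfRankN, Finset.inf_eq_iInf]
  exact iInf_congr fun ω => by simp

lemma accepts_iff_exists {Ω : Type*} [Fintype Ω] (κ : Ω → ℕ) (C D : Set Ω) :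
    Accepts κ C D ↔ ∃ ω ∈ C ∩ D, ∀ ω' ∈ C ∩ Dᶜ, κ ω < κ ω' := by
  classical
  rw [Accepts, rank_finset, rank_finset, Finset.inf_lt_iff]
  constructor
  · rintro ⟨ω, hω, hlt⟩
    refine ⟨ω, by simpa using hω, fun ω' hω' => ?_⟩
    have := (Finset.lt_inf_iff (by exact_mod_cast WithTop.coe_lt_top (κ ω))).mp hlt ω'
      (by simpa using hω')
    exact_mod_cast this
  · rintro ⟨ω, hω, hlt⟩
    refine ⟨ω, by simpa using hω, ?_⟩
    rw [Finset.lt_inf_iff (by exact_mod_cast WithTop.coe_lt_top (κ ω))]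
    intro ω' hω'
    exact_mod_cast hlt ω' (by simpa using hω')

lemma delta_const {Ω : Type*} [Fintype Ω] (κ κs : Ω → ℕ) (A B : Set Ω)
    (hcp : CondPres1 κ κs A B) (ω₁ ω₂ : Ω) (h : sigma1 A B ω₁ = sigma1 A B ω₂) :
    (κs ω₁ : ℤ) - (κ ω₁ : ℤ) = (κs ω₂ : ℤ) - (κ ω₂ : ℤ) := by
  classical
  by_cases heq : ω₁ = ω₂
  · rw [heq]
  · set d : Ω → ℤ := fun ω => (if ω = ω₁ then (1 : ℤ) else 0) - (if ω = ω₂ then 1 else 0) with hd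
    have h1 : ∑ ω, d ω = 0 := by
      simp [hd, Finset.sum_sub_distrib]
    have h2 : ∑ ω, d ω • sigma1 A B ω = 0 := by
      have : ∀ ω, d ω • sigma1 A B ω =
          (if ω = ω₁ then sigma1 A B ω else 0) - (if ω = ω₂ then sigma1 A B ω else 0) := by
        intro ω
        simp [hd, sub_smul, ite_smul]
      simp only [this, Finset.sum_sub_distrib, Finset.sum_ite_eq', Finset.mem_univ, if_true]
      rw [h]; simp
    have h3 := hcp d h1 h2
    have : ∀ ω, d ω * ((κs ω : ℤ) - (κ ω : ℤ)) =
        (if ω = ω₁ then ((κs ω : ℤ) - (κ ω : ℤ)) else 0)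
          - (if ω = ω₂ then ((κs ω : ℤ) - (κ ω : ℤ)) else 0) := by
      intro ω
      simp [hd, sub_mul, ite_mul]
    rw [Finset.sum_congr rfl (fun ω _ => this ω), Finset.sum_sub_distrib] at h3
    simp only [Finset.sum_ite_eq', Finset.mem_univ, if_true] at h3
    linarith

lemma accepts_congr {Ω : Type*} [Fintype Ω] (κ κs : Ω → ℕ) (C D : Set Ω)
    (h : ∀ ω ∈ C, ∀ ω' ∈ C, (κs ω : ℤ) - (κ ω : ℤ) = (κs ω' : ℤ) - (κ ω' : ℤ)) :
    Accepts κ C D ↔ Accepts κs C D := by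
  rw [accepts_iff_exists, accepts_iff_exists]
  constructor <;> rintro ⟨ω, hω, hlt⟩ <;> refine ⟨ω, hω, fun ω' hω' => ?_⟩
  · have := h ω hω.1 ω' hω'.1
    have := hlt ω' hω'
    omega
  · have := h ω hω.1 ω' hω'.1
    have := hlt ω' hω'
    omega

/-- Postulate (CR5): a revision by `(B|A)` satisfying the principle of
conditional preservation accepts a conditional `(D|C)` perpendicular to
`(B|A)` iff the prior state accepted it. -/
theorem stmt9 {Ω : Type*} [Fintype Ω] [Nonempty Ω]
    (κ κs : Ω → ℕ) (hκ : ∃ ω, κ ω = 0) (hκs : ∃ ω, κs ω = 0)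
    (A B : Set Ω) (hcp : CondPres1 κ κs A B)
    (C D : Set Ω) (hperp : Perp C D A B) :
    Accepts κ C D ↔ Accepts κs C D := by
  apply accepts_congr
  intro ω hω ω' hω'
  apply delta_const κ κs A B hcp
  rcases hperp with hsub | hsub | hsub
  · have h1 := hsub hω; have h2 := hsub hω'
    simp [sigma1, h1.1, h1.2, h2.1, h2.2]
  · have h1 := hsub hω; have h2 := hsub hω'
    simp [sigma1, h1.1, h2.1, if_neg h1.2, if_neg h2.2]
  · have h1 := hsub hω; have h2 := hsub hω'
    simp [sigma1, if_neg h1, if_neg h2]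
end
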